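/- The sequence defined by the recurrence l_i = ((d+1)l_{i-1} - l_{i-2})/d with l₁ = ((d+1)/d)·l₀ satisfies, for all 1 ≤ j ≤ k: l_{k+1} = (1 + Σ_{i=1}^{j} d^{-i})·l_{k-j+1} - (Σ_{i=1}^{j} d^{-i})·l_{k-j}, where d > 0. -/

import Mathlib

/-!
With `r = 1/d` the recurrence reads `l (n+2) = (1 + r) l (n+1) - r l n`. Unrolling it one step
further back turns the coefficient pair `(1 + S, S)` into `(1 + r (1 + S), r (1 + S))`, and
`r (1 + S_j) = S_{j+1}` for the partial geometric sums `S_j = r + ⋯ + r^j`.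
-/

theorem sum_Icc_one_pow_succ {R : Type*} [CommRing R] (r : R) (j : ℕ) :
    ∑ i ∈ Finset.Icc 1 (j + 1), r ^ i = r * (1 + ∑ i ∈ Finset.Icc 1 j, r ^ i) := by
  induction j with
  | zero => simp
  | succ j ih =>
    rw [Finset.sum_Icc_succ_top (by omega : 1 ≤ j + 2),
      Finset.sum_Icc_succ_top (by omega : 1 ≤ j + 1)] at *
    linear_combination ih

theorem eq_geomSum_mul_of_two_step_recurrence {R : Type*} [CommRing R] (r : R) (l : ℕ → R)
    (hrec : ∀ n, l (n + 2) = (1 + r) * l (n + 1) - r * l n) (j m : ℕ) :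
    l (m + j + 1) = (1 + ∑ i ∈ Finset.Icc 1 j, r ^ i) * l (m + 1)
      - (∑ i ∈ Finset.Icc 1 j, r ^ i) * l m := by
  induction j generalizing m with
  | zero => simp
  | succ j ih =>
    rw [show m + (j + 1) + 1 = (m + 1) + j + 1 by omega, ih, hrec, sum_Icc_one_pow_succ]
    ring

theorem recurrence_unrolling_general
    (d : ℝ) (hd : 0 < d) (l : ℕ → ℝ)
    (hrec : ∀ i : ℕ, l (i + 2) = ((d + 1) * l (i + 1) - l i) / d) :
    ∀ j k : ℕ, 1 ≤ j → j ≤ k →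
      l (k + 1) = (1 + ∑ i ∈ Finset.Icc 1 j, (1 / d) ^ i) * l (k - j + 1)
        - (∑ i ∈ Finset.Icc 1 j, (1 / d) ^ i) * l (k - j) := by
  intro j k _ hjk
  have hrec' : ∀ n, l (n + 2) = (1 + 1 / d) * l (n + 1) - 1 / d * l n := fun n => by
    rw [hrec]
    field_simp
  simpa [Nat.sub_add_cancel hjk] using
    eq_geomSum_mul_of_two_step_recurrence (1 / d) l hrec' j (k - j)

/-- For the recurrence `l_i = ((d+1) l_{i-1} - l_{i-2})/d` with
`l₁ = ((d+1)/d) l₀` and `d > 0`, for all `1 ≤ j ≤ k`: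
`l_{k+1} = (1 + Σ_{i=1}^j d^{-i}) l_{k-j+1} - (Σ_{i=1}^j d^{-i}) l_{k-j}`. -/
theorem recurrence_unrolling
    (d : ℝ) (hd : 0 < d) (l : ℕ → ℝ)
    (hrec : ∀ i : ℕ, l (i + 2) = ((d + 1) * l (i + 1) - l i) / d)
    (hinit : l 1 = ((d + 1) / d) * l 0) :
    ∀ j k : ℕ, 1 ≤ j → j ≤ k →
      l (k + 1) = (1 + ∑ i ∈ Finset.Icc 1 j, (1 / d) ^ i) * l (k - j + 1)
        - (∑ i ∈ Finset.Icc 1 j, (1 / d) ^ i) * l (k - j) :=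
  recurrence_unrolling_general d hd l hrec
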